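/- arXiv:1909.09717 — 2 statements merged into one kernel-verified Lean document; each statement's English description precedes it below -/
import Mathlib

section
/- Let A be a normed division algebra. Then for all a, b ∈ A one has conj(a*b) = conj(b) * conj(a). -/
open scoped RealInnerProductSpace

/-- A normed division algebra: a real inner product space with an `ℝ`-bilinear
multiplication (not necessarily associative or commutative), a two-sided
multiplicative identity `one ≠ 0`, satisfying `‖a*b‖ = ‖a‖ * ‖b‖`. -/
structure NormedDivisionAlgebra (A : Type*) [NormedAddCommGroup A] [InnerProductSpace ℝ A] where
  mul : A →ₗ[ℝ] A →ₗ[ℝ] A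
  one : A
  one_ne_zero : one ≠ 0
  one_mul : ∀ a : A, mul one a = a
  mul_one : ∀ a : A, mul a one = a
  norm_mul : ∀ a b : A, ‖mul a b‖ = ‖a‖ * ‖b‖

namespace NormedDivisionAlgebra

variable {A : Type*} [NormedAddCommGroup A] [InnerProductSpace ℝ A]

/-- `Re a`: the orthogonal projection of `a` onto the real part `Re A = ℝ · 1`. -/
noncomputable def re (D : NormedDivisionAlgebra A) (a : A) : A :=
  (⟪a, D.one⟫ / ‖D.one‖ ^ 2) • D.one

/-- `Im a`: the orthogonal projection of `a` onto the imaginary part `Im A = (ℝ · 1)ᗮ`. -/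
noncomputable def im (D : NormedDivisionAlgebra A) (a : A) : A := a - D.re a

/-- The conjugate `conj a = Re a - Im a`. -/
noncomputable def conj (D : NormedDivisionAlgebra A) (a : A) : A := D.re a - D.im a

/-- The real part `Re A = ℝ · 1` as a submodule. -/
def ReSub (D : NormedDivisionAlgebra A) : Submodule ℝ A := Submodule.span ℝ {D.one}

/-- The imaginary part `Im A = (ℝ · 1)ᗮ` as a submodule. -/
noncomputable def ImSub (D : NormedDivisionAlgebra A) : Submodule ℝ A := (Submodule.span ℝ {D.one})ᗮ

/-- The commutator `[a, b] = a*b - b*a`. -/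
def comm (D : NormedDivisionAlgebra A) (a b : A) : A := D.mul a b - D.mul b a

/-- The associator `[a, b, c] = (a*b)*c - a*(b*c)`. -/
def assoc (D : NormedDivisionAlgebra A) (a b c : A) : A :=
  D.mul (D.mul a b) c - D.mul a (D.mul b c)

/-- The cross product `a × b = Im (a*b)` (intended for `a, b ∈ Im A`). -/
noncomputable def cross (D : NormedDivisionAlgebra A) (a b : A) : A := D.im (D.mul a b)

end NormedDivisionAlgebra

/-! Polarizing `‖a * b‖² = ‖a‖² ‖b‖²` in each factor shows that multiplication by `conj a` on
the left (resp. `conj b` on the right) is the adjoint of multiplication by `a` (resp. `b`), and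
`conj` is self-adjoint and involutive. Testing against any `c` then gives
`⟪conj (a * b), c⟫ = ⟪b, conj a * conj c⟫ = ⟪conj a, b * c⟫ = ⟪conj b * conj a, c⟫`. -/

namespace NormedDivisionAlgebra

variable {A : Type*} [NormedAddCommGroup A] [InnerProductSpace ℝ A] (D : NormedDivisionAlgebra A)

theorem norm_one : ‖D.one‖ = 1 := by
  have h : ‖D.one‖ * ‖D.one‖ = ‖D.one‖ * 1 := by
    rw [← D.norm_mul, D.mul_one]; ring
  exact mul_left_cancel₀ (norm_ne_zero_iff.mpr D.one_ne_zero) h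

theorem inner_mul_mul_self_left (a b c : A) :
    ⟪D.mul a b, D.mul a c⟫ = ‖a‖ ^ 2 * ⟪b, c⟫ := by
  rw [real_inner_eq_norm_add_mul_self_sub_norm_mul_self_sub_norm_mul_self_div_two,
    real_inner_eq_norm_add_mul_self_sub_norm_mul_self_sub_norm_mul_self_div_two b c,
    ← map_add, D.norm_mul, D.norm_mul, D.norm_mul]
  ring

theorem inner_mul_mul_self_right (a b c : A) :
    ⟪D.mul b a, D.mul c a⟫ = ‖a‖ ^ 2 * ⟪b, c⟫ := by
  rw [real_inner_eq_norm_add_mul_self_sub_norm_mul_self_sub_norm_mul_self_div_two,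
    real_inner_eq_norm_add_mul_self_sub_norm_mul_self_sub_norm_mul_self_div_two b c,
    ← LinearMap.add_apply, ← map_add, D.norm_mul, D.norm_mul, D.norm_mul]
  ring

theorem inner_mul_mul_add_swap_left (a b c d : A) :
    ⟪D.mul a b, D.mul c d⟫ + ⟪D.mul c b, D.mul a d⟫ = 2 * ⟪a, c⟫ * ⟪b, d⟫ := by
  have h := D.inner_mul_mul_self_left (a + c) b d
  simp only [map_add, LinearMap.add_apply, inner_add_left, inner_add_right,
    norm_add_sq_real, D.inner_mul_mul_self_left] at h
  linarith

theorem inner_mul_mul_add_swap_right (a b c d : A) :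
    ⟪D.mul a b, D.mul c d⟫ + ⟪D.mul a d, D.mul c b⟫ = 2 * ⟪a, c⟫ * ⟪b, d⟫ := by
  have h := D.inner_mul_mul_self_right (b + d) a c
  simp only [map_add, inner_add_left, inner_add_right, norm_add_sq_real,
    D.inner_mul_mul_self_right] at h
  linarith

theorem conj_eq (a : A) : D.conj a = (2 * ⟪a, D.one⟫) • D.one - a := by
  simp only [conj, im, re, D.norm_one]
  module

theorem conj_mul_eq (a b : A) : D.mul (D.conj a) b = (2 * ⟪a, D.one⟫) • b - D.mul a b := by
  rw [conj_eq, map_sub, map_smul, LinearMap.sub_apply, LinearMap.smul_apply, D.one_mul]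

theorem mul_conj_eq (a b : A) : D.mul a (D.conj b) = (2 * ⟪b, D.one⟫) • a - D.mul a b := by
  rw [conj_eq, map_sub, map_smul, D.mul_one]

theorem inner_conj_left (a b : A) : ⟪D.conj a, b⟫ = ⟪a, D.conj b⟫ := by
  simp only [conj_eq, inner_sub_left, inner_sub_right, inner_smul_left, inner_smul_right,
    real_inner_comm b D.one, RCLike.conj_to_real]
  ring

theorem conj_conj (a : A) : D.conj (D.conj a) = a := by
  have h : ⟪D.conj a, D.one⟫ = ⟪a, D.one⟫ := by
    rw [inner_conj_left, conj_eq, inner_sub_right, inner_smul_right, real_inner_self_eq_norm_sq,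
      D.norm_one, real_inner_comm]
    ring
  rw [conj_eq, h, conj_eq]
  module

theorem inner_mul_eq_inner_conj_mul (a b c : A) : ⟪D.mul a b, c⟫ = ⟪b, D.mul (D.conj a) c⟫ := by
  have h := D.inner_mul_mul_add_swap_left a b D.one c
  rw [D.one_mul, D.one_mul] at h
  rw [conj_mul_eq, inner_sub_right, inner_smul_right]
  linarith

theorem inner_mul_eq_inner_mul_conj (a b c : A) : ⟪D.mul a b, c⟫ = ⟪a, D.mul c (D.conj b)⟫ := by
  have h := D.inner_mul_mul_add_swap_right a b c D.one
  rw [D.mul_one, D.mul_one] at h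
  rw [mul_conj_eq, inner_sub_right, inner_smul_right]
  linarith

end NormedDivisionAlgebra

theorem nda_conj_mul {A : Type*} [NormedAddCommGroup A] [InnerProductSpace ℝ A]
    (D : NormedDivisionAlgebra A) (a b : A) :
    D.conj (D.mul a b) = D.mul (D.conj b) (D.conj a) := by
  refine ext_inner_right ℝ fun c => ?_
  calc ⟪D.conj (D.mul a b), c⟫
      = ⟪b, D.mul (D.conj a) (D.conj c)⟫ := by
        rw [D.inner_conj_left, D.inner_mul_eq_inner_conj_mul]
    _ = ⟪D.conj a, D.mul b c⟫ := by
        rw [real_inner_comm, D.inner_mul_eq_inner_mul_conj, D.conj_conj]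
    _ = ⟪D.mul (D.conj b) (D.conj a), c⟫ := by
        rw [D.inner_mul_eq_inner_conj_mul, D.conj_conj]
end

section
/- Let A be a normed division algebra and let a, b, c ∈ Im A. Then the calibration identity holds: ‖(1/2) • [a,b,c]‖² + ⟨a*b, c⟩² = ‖a‖²‖b‖²‖c‖² − ‖a‖²⟨b,c⟩² − ‖b‖²⟨a,c⟩² − ‖c‖²⟨a,b⟩² + 2⟨a,b⟩⟨a,c⟩⟨b,c⟩, where [a,b,c] = (a*b)*c − a*(b*c) is the associator. (The right-hand side equals ‖a ∧ b ∧ c‖².) -/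
open scoped RealInnerProductSpace

/-!
Polarizing `‖x * y‖ = ‖x‖ * ‖y‖` in each factor gives the exchange identities
`⟪x y, z w⟫ + ⟪z y, x w⟫ = 2 ⟪x, z⟫ ⟪y, w⟫` and their mirror images. For imaginary elements they
make left and right multiplication skew-adjoint and give `a a = -‖a‖² 1`, `a b + b a = -2 ⟪a, b⟫ 1`,
`(a b) a = a (b a) = ‖a‖² b - 2 ⟪a, b⟫ a`. Since `‖(a b) c‖ = ‖a (b c)‖ = ‖a‖ ‖b‖ ‖c‖`, the identity
amounts to computing `⟪(a b) c, a (b c)⟫`; two exchange identities turn it into `⟪(a b) a, c (b c)⟫`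
and `⟪(a b) (b c), 1⟫`, which the rules above evaluate.
-/

namespace NormedDivisionAlgebra

variable {A : Type*} [NormedAddCommGroup A] [InnerProductSpace ℝ A] (D : NormedDivisionAlgebra A)

lemma inner_one_eq_zero_of_mem_imSub {a : A} (ha : a ∈ D.ImSub) : ⟪a, D.one⟫ = 0 :=
  real_inner_comm a D.one ▸
    (Submodule.mem_orthogonal _ _).1 ha D.one (Submodule.mem_span_singleton_self _)

lemma norm_sq_mul (x y : A) : ‖D.mul x y‖ ^ 2 = ‖x‖ ^ 2 * ‖y‖ ^ 2 := by
  rw [D.norm_mul, mul_pow]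

lemma inner_mul_mul_left (x y z : A) :
    ⟪D.mul x y, D.mul x z⟫ = ‖x‖ ^ 2 * ⟪y, z⟫ := by
  have h := D.norm_sq_mul x (y + z)
  rw [map_add, norm_add_sq_real, norm_add_sq_real, D.norm_sq_mul, D.norm_sq_mul] at h
  linear_combination h / 2

lemma inner_mul_mul_right (x y z : A) :
    ⟪D.mul x z, D.mul y z⟫ = ⟪x, y⟫ * ‖z‖ ^ 2 := by
  have h := D.norm_sq_mul (x + y) z
  rw [map_add, LinearMap.add_apply, norm_add_sq_real, norm_add_sq_real, D.norm_sq_mul,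
    D.norm_sq_mul] at h
  linear_combination h / 2

lemma inner_mul_mul_add_inner_mul_mul_left (x y z w : A) :
    ⟪D.mul x y, D.mul z w⟫ + ⟪D.mul z y, D.mul x w⟫ = 2 * ⟪x, z⟫ * ⟪y, w⟫ := by
  have h := D.inner_mul_mul_left (x + z) y w
  simp only [map_add, LinearMap.add_apply, inner_add_left, inner_add_right, norm_add_sq_real,
    D.inner_mul_mul_left] at h
  linear_combination h

lemma inner_mul_mul_add_inner_mul_mul_right (x y u v : A) :
    ⟪D.mul x u, D.mul y v⟫ + ⟪D.mul x v, D.mul y u⟫ = 2 * ⟪x, y⟫ * ⟪u, v⟫ := by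
  have h := D.inner_mul_mul_right x y (u + v)
  simp only [map_add, inner_add_left, inner_add_right, norm_add_sq_real,
    D.inner_mul_mul_right] at h
  linear_combination h

lemma inner_mul_left_self (x y : A) : ⟪D.mul x y, x⟫ = ‖x‖ ^ 2 * ⟪y, D.one⟫ := by
  simpa only [D.mul_one] using D.inner_mul_mul_left x y D.one

lemma inner_mul_right_self (x y : A) : ⟪D.mul x y, y⟫ = ⟪x, D.one⟫ * ‖y‖ ^ 2 := by
  simpa only [D.one_mul] using D.inner_mul_mul_right x D.one y

lemma norm_assoc_sq (a b c : A) :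
    ‖D.assoc a b c‖ ^ 2 =
      2 * (‖a‖ ^ 2 * ‖b‖ ^ 2 * ‖c‖ ^ 2) - 2 * ⟪D.mul (D.mul a b) c, D.mul a (D.mul b c)⟫ := by
  rw [assoc, norm_sub_sq_real, D.norm_sq_mul, D.norm_sq_mul, D.norm_sq_mul, D.norm_sq_mul]
  ring

section Imaginary

variable {D} {a b c : A}

lemma inner_mul_left_skew (ha : ⟪a, D.one⟫ = 0) (y z : A) :
    ⟪D.mul a y, z⟫ = -⟪y, D.mul a z⟫ := by
  have h := D.inner_mul_mul_add_inner_mul_mul_left a y D.one z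
  rw [D.one_mul, D.one_mul, ha] at h
  linarith

lemma inner_mul_right_skew (hb : ⟪b, D.one⟫ = 0) (x z : A) :
    ⟪D.mul x b, z⟫ = -⟪x, D.mul z b⟫ := by
  have h := D.inner_mul_mul_add_inner_mul_mul_right x z b D.one
  rw [D.mul_one, D.mul_one, hb] at h
  linarith

lemma inner_mul_one (ha : ⟪a, D.one⟫ = 0) (y : A) : ⟪D.mul a y, D.one⟫ = -⟪a, y⟫ := by
  rw [inner_mul_left_skew ha, D.mul_one, real_inner_comm]

lemma mul_mul_add_mul_mul_left (ha : ⟪a, D.one⟫ = 0) (hb : ⟪b, D.one⟫ = 0) (z : A) :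
    D.mul a (D.mul b z) + D.mul b (D.mul a z) = -((2 * ⟪a, b⟫) • z) := by
  refine ext_inner_right ℝ fun v => ?_
  have h := D.inner_mul_mul_add_inner_mul_mul_left b z a v
  rw [inner_add_left, inner_mul_left_skew ha (D.mul b z), inner_mul_left_skew hb (D.mul a z),
    inner_neg_left, real_inner_smul_left, real_inner_comm b a]
  linear_combination -h

lemma mul_mul_add_mul_mul_right (ha : ⟪a, D.one⟫ = 0) (hb : ⟪b, D.one⟫ = 0) (z : A) :
    D.mul (D.mul z a) b + D.mul (D.mul z b) a = -((2 * ⟪a, b⟫) • z) := by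
  refine ext_inner_right ℝ fun v => ?_
  have h := D.inner_mul_mul_add_inner_mul_mul_right z v a b
  rw [inner_add_left, inner_mul_right_skew hb (D.mul z a), inner_mul_right_skew ha (D.mul z b),
    inner_neg_left, real_inner_smul_left]
  linear_combination -h

lemma mul_self (ha : ⟪a, D.one⟫ = 0) : D.mul a a = -(‖a‖ ^ 2 • D.one) := by
  have h := mul_mul_add_mul_mul_left ha ha D.one
  rw [D.mul_one, ← two_smul ℝ, real_inner_self_eq_norm_sq, mul_smul, ← smul_neg] at h
  exact smul_right_injective A two_ne_zero h

lemma mul_add_mul_swap (ha : ⟪a, D.one⟫ = 0) (hb : ⟪b, D.one⟫ = 0) :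
    D.mul a b + D.mul b a = -((2 * ⟪a, b⟫) • D.one) := by
  simpa only [D.mul_one] using mul_mul_add_mul_mul_left ha hb D.one

lemma mul_mul_self_right (ha : ⟪a, D.one⟫ = 0) (hb : ⟪b, D.one⟫ = 0) :
    D.mul (D.mul a b) a = ‖a‖ ^ 2 • b - (2 * ⟪a, b⟫) • a := by
  have h := mul_mul_add_mul_mul_right hb ha a
  rw [mul_self ha, map_neg, map_smul, LinearMap.neg_apply, LinearMap.smul_apply, D.one_mul,
    real_inner_comm] at h
  rw [sub_eq_add_neg, ← h]
  abel

lemma mul_mul_self_left (ha : ⟪a, D.one⟫ = 0) (hb : ⟪b, D.one⟫ = 0) :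
    D.mul a (D.mul b a) = ‖a‖ ^ 2 • b - (2 * ⟪a, b⟫) • a := by
  have h := mul_mul_add_mul_mul_left ha hb a
  rw [mul_self ha, map_neg, map_smul, D.mul_one] at h
  rw [sub_eq_add_neg, ← h]
  abel

lemma inner_mul_cyclic (ha : ⟪a, D.one⟫ = 0) (hb : ⟪b, D.one⟫ = 0) (hc : ⟪c, D.one⟫ = 0) :
    ⟪D.mul b c, a⟫ = ⟪D.mul a b, c⟫ := by
  rw [inner_mul_left_skew hb, eq_sub_of_add_eq' (mul_add_mul_swap ha hb), inner_sub_right,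
    inner_neg_right, real_inner_smul_right, hc, real_inner_comm c]
  ring

lemma inner_mul_mul_mul_one (ha : ⟪a, D.one⟫ = 0) (hb : ⟪b, D.one⟫ = 0) :
    ⟪D.mul (D.mul a b) (D.mul b c), D.one⟫ = ‖b‖ ^ 2 * ⟪a, c⟫ := by
  have h₁ := D.inner_mul_mul_add_inner_mul_mul_left (D.mul a b) (D.mul b c) D.one D.one
  have h₂ := D.inner_mul_mul_add_inner_mul_mul_left b c a b
  rw [D.one_mul, D.one_mul, D.mul_one, inner_mul_one ha, inner_mul_one hb] at h₁
  rw [mul_self hb, inner_neg_right, real_inner_smul_right, inner_mul_one ha, real_inner_comm a b,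
    real_inner_comm b c] at h₂
  linear_combination h₁ - h₂

lemma inner_mul_mul_assoc (ha : ⟪a, D.one⟫ = 0) (hb : ⟪b, D.one⟫ = 0) (hc : ⟪c, D.one⟫ = 0) :
    ⟪D.mul (D.mul a b) c, D.mul a (D.mul b c)⟫ =
      2 * ⟪D.mul a b, c⟫ ^ 2 - ‖a‖ ^ 2 * ‖b‖ ^ 2 * ‖c‖ ^ 2 + 2 * ‖a‖ ^ 2 * ⟪b, c⟫ ^ 2
        + 2 * ‖b‖ ^ 2 * ⟪a, c⟫ ^ 2 + 2 * ‖c‖ ^ 2 * ⟪a, b⟫ ^ 2 - 4 * ⟪a, b⟫ * ⟪a, c⟫ * ⟪b, c⟫ := by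
  have h₁ := D.inner_mul_mul_add_inner_mul_mul_right (D.mul a b) a c (D.mul b c)
  rw [D.inner_mul_left_self, real_inner_comm (D.mul b c), D.inner_mul_right_self, hb] at h₁
  -- `c a = -2 ⟪a, c⟫ 1 - a c` trades `⟪(a b) (b c), a c⟫` for `⟪(a b) (b c), c a⟫`
  have h₂ := D.inner_mul_mul_add_inner_mul_mul_right (D.mul a b) c (D.mul b c) a
  rw [eq_sub_of_add_eq' (mul_add_mul_swap ha hc), mul_mul_self_right ha hb,
    mul_mul_self_left hc hb, inner_mul_cyclic ha hb hc] at h₂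
  simp only [inner_sub_left, inner_sub_right, inner_neg_right, real_inner_smul_left,
    real_inner_smul_right, inner_mul_mul_mul_one ha hb, real_inner_self_eq_norm_sq,
    real_inner_comm b c] at h₂
  linear_combination h₁ + h₂

end Imaginary

end NormedDivisionAlgebra

theorem nda_calibration_identity {A : Type*} [NormedAddCommGroup A] [InnerProductSpace ℝ A]
    (D : NormedDivisionAlgebra A) (a b c : A)
    (ha : a ∈ D.ImSub) (hb : b ∈ D.ImSub) (hc : c ∈ D.ImSub) :
    ‖(1 / 2 : ℝ) • D.assoc a b c‖ ^ 2 + ⟪D.mul a b, c⟫ ^ 2 =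
      ‖a‖ ^ 2 * ‖b‖ ^ 2 * ‖c‖ ^ 2 - ‖a‖ ^ 2 * ⟪b, c⟫ ^ 2 - ‖b‖ ^ 2 * ⟪a, c⟫ ^ 2
        - ‖c‖ ^ 2 * ⟪a, b⟫ ^ 2 + 2 * ⟪a, b⟫ * ⟪a, c⟫ * ⟪b, c⟫ := by
  have hS := D.inner_mul_mul_assoc (D.inner_one_eq_zero_of_mem_imSub ha)
    (D.inner_one_eq_zero_of_mem_imSub hb) (D.inner_one_eq_zero_of_mem_imSub hc)
  rw [norm_smul, mul_pow, D.norm_assoc_sq, hS, Real.norm_eq_abs, sq_abs]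
  ring
end
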